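/- arXiv:1911.06060 — 9 statements merged into one kernel-verified Lean document; each statement's English description precedes it below -/
import Mathlib

section
/- Let G be a connected k-regular finite simple graph with n vertices and m edges, where k ≥ 2. Then the characteristic polynomial of the positive support U⁺ of the Grover transition matrix satisfies, for every complex number λ, det(λ·I_{2m} − U⁺) = (λ² − 1)^{m−n} · det(λ²·I_n − λ·A(G) + (k−1)·I_n). Equivalently, U⁺ has 2n eigenvalues of the form λ = λ_A/2 ± i√(k − 1 − λ_A²/4) with λ_A an eigenvalue of A(G), and the remaining 2(m−n) eigenvalues are ±1 with equal multiplicities. -/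
open Matrix SimpleGraph

variable {V : Type*} [Fintype V] [DecidableEq V]

/-- The Grover transition matrix `U` of a graph `G`, indexed by darts (arcs):
`U e f = 2/deg(t(f)) - 1` if `f = e⁻¹`, `U e f = 2/deg(t(f))` if `t(f) = o(e)` and
`f ≠ e⁻¹`, and `0` otherwise.  (When `t(f) = o(e)` we have `deg (t f) = deg (o e)`.) -/
noncomputable def grover (G : SimpleGraph V) [DecidableRel G.Adj] :
    Matrix G.Dart G.Dart ℝ := fun e f =>
  if f = e.symm then 2 / (G.degree e.toProd.1) - 1
  else if f.toProd.2 = e.toProd.1 then 2 / (G.degree e.toProd.1) else 0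

/-- The positive support of a real square matrix. -/
noncomputable def posSupp {α : Type*} (M : Matrix α α ℝ) : Matrix α α ℝ :=
  fun i j => if 0 < M i j then 1 else 0

/-- The matrix `B` with `B e f = 1` iff `t(e) = o(f)`. -/
def Bmat (G : SimpleGraph V) [DecidableRel G.Adj] : Matrix G.Dart G.Dart ℝ :=
  fun e f => if e.toProd.2 = f.toProd.1 then 1 else 0

/-- The arc-inversion matrix `J₀` with `(J₀) e f = 1` iff `f = e⁻¹`. -/
def J0 (G : SimpleGraph V) [DecidableRel G.Adj] : Matrix G.Dart G.Dart ℝ :=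
  fun e f => if f = e.symm then 1 else 0

/-- The diagonal degree matrix of `G`. -/
noncomputable def degMat (G : SimpleGraph V) [DecidableRel G.Adj] : Matrix V V ℝ :=
  Matrix.diagonal fun v => (G.degree v : ℝ)

/-!
For `k ≥ 2` the positive support `U⁺` is the transpose of Hashimoto's non-backtracking matrix
`B` (`B e f = 1` iff `t(e) = o(f)` and `f ≠ e⁻¹`), so the theorem is the Ihara–Bass formula.
With `K`, `L` the tail and head incidence matrices and `J` the arc reversal, `B = Lᵀ K - J`,
`J Lᵀ = Kᵀ` and `J² = 1`, whence `(λ - J)(λ - B) = (λ² - 1) - (λ Lᵀ - Kᵀ) K`. Moving `K` to the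
front (Sylvester) turns this into `(λ² - 1) - λ A + D` on vertices, where `K Lᵀ = A` and
`K Kᵀ = D` is the degree matrix, and `det (λ - J) = (λ² - 1)^m` because `J` pairs up the arcs.
The resulting polynomial identity can be divided by powers of `λ² - 1` away from `λ = ±1`, and
continuity closes the gap.
-/

namespace Function.Involutive

variable {n α : Type*} [LinearOrder α] {σ : n → n}

def pairEquiv (hσ : Involutive σ) (hfix : ∀ x, σ x ≠ x) {f : n → α} (hf : Injective f) :
    Bool × {x // f x < f (σ x)} ≃ n where
  toFun p := bif p.1 then p.2 else σ p.2
  invFun x := if h : f x < f (σ x) then (true, ⟨x, h⟩)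
    else (false, ⟨σ x, by rw [hσ x]; exact lt_of_le_of_ne (not_lt.mp h) (hf.ne (hfix x))⟩)
  left_inv := by
    rintro ⟨_ | _, x, hx⟩
    · simp [hσ x, hx.not_gt]
    · simp [hx]
  right_inv x := by
    by_cases h : f x < f (σ x) <;> simp [h, hσ x]

lemma pairEquiv_not (hσ : Involutive σ) (hfix : ∀ x, σ x ≠ x) {f : n → α} (hf : Injective f)
    (b : Bool) (x : {x // f x < f (σ x)}) :
    hσ.pairEquiv hfix hf (!b, x) = σ (hσ.pairEquiv hfix hf (b, x)) := by
  cases b <;> simp [pairEquiv, hσ x]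

end Function.Involutive

namespace Matrix

theorem det_smul_one_sub_mul_comm {m n R : Type*} [Fintype m] [Fintype n] [DecidableEq m]
    [DecidableEq n] [CommRing R] (A : Matrix m n R) (B : Matrix n m R) (c : R) :
    c ^ Fintype.card n * det (c • 1 - A * B) = c ^ Fintype.card m * det (c • 1 - B * A) := by
  simpa [eval_charpoly, smul_one_eq_diagonal] using
    congrArg (Polynomial.eval c) (charpoly_mul_comm' A B)

lemma permMatrix_apply {n R : Type*} [DecidableEq n] [Zero R] [One R] (σ : Equiv.Perm n)
    (i j : n) : σ.permMatrix R i j = if σ i = j then 1 else 0 := by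
  rw [Equiv.Perm.permMatrix, PEquiv.toMatrix_toPEquiv_eq, submatrix_apply, one_apply, id]

theorem det_smul_one_add_smul_permMatrix_of_involutive {n R : Type*} [Fintype n] [DecidableEq n]
    [CommRing R] (σ : Equiv.Perm n) (hσ : Function.Involutive σ) (hfix : ∀ x, σ x ≠ x)
    (a c : R) :
    det (a • 1 + c • σ.permMatrix R) = (a ^ 2 - c ^ 2) ^ (Fintype.card n / 2) := by
  let f : n → ℕ := fun x => Fintype.equivFin n x
  have hf : Function.Injective f := Fin.val_injective.comp (Fintype.equivFin n).injective
  set e := hσ.pairEquiv hfix hf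
  have hσe (p : Bool × _) : σ (e p) = e (!p.1, p.2) := (hσ.pairEquiv_not hfix hf p.1 p.2).symm
  let M : Matrix Bool Bool R := of fun b b' => if b = b' then a else c
  have hblock : reindex e.symm e.symm (a • 1 + c • σ.permMatrix R) = blockDiagonal fun _ => M := by
    ext ⟨b, x⟩ ⟨b', y⟩
    simp only [reindex_apply, submatrix_apply, Equiv.symm_symm, add_apply, smul_apply,
      smul_eq_mul, one_apply, permMatrix_apply, hσe, e.apply_eq_iff_eq, blockDiagonal_apply,
      of_apply, Prod.mk.injEq, M]
    by_cases hxy : x = y <;> cases b <;> cases b' <;> simp [hxy]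
  have hM : det M = a ^ 2 - c ^ 2 := by
    rw [← det_submatrix_equiv_self finTwoEquiv, det_fin_two]
    simp [M, finTwoEquiv, sq]
  have hcard : Fintype.card n / 2 = Fintype.card {x // f x < f (σ x)} := by
    rw [← Fintype.card_congr e, Fintype.card_prod, Fintype.card_bool,
      Nat.mul_div_cancel_left _ two_pos]
  rw [← det_reindex_self e.symm, hblock, det_blockDiagonal, Finset.prod_const, hM, hcard,
    Finset.card_univ]

end Matrix

namespace SimpleGraph

open Finset

variable (G : SimpleGraph V) (R : Type*)

def dartSymmPerm : Equiv.Perm G.Dart := Dart.symm_involutive.toPerm _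

section Incidence

variable [Zero R] [One R]

def tailMat : Matrix V G.Dart R := of fun v e => if e.fst = v then 1 else 0

def headMat : Matrix V G.Dart R := of fun v e => if e.snd = v then 1 else 0

def nonBacktrackingMat : Matrix G.Dart G.Dart R :=
  of fun e f => if e.snd = f.fst ∧ f ≠ e.symm then 1 else 0

end Incidence

variable {R}

omit [Fintype V] in
lemma map_nonBacktrackingMat {S : Type*} [Zero R] [One R] [Zero S] [One S] {φ : R → S}
    (h0 : φ 0 = 0) (h1 : φ 1 = 1) : (G.nonBacktrackingMat R).map φ = G.nonBacktrackingMat S := by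
  ext e f
  simp [nonBacktrackingMat, apply_ite φ, h0, h1]

lemma posSupp_grover [DecidableRel G.Adj] (hdeg : ∀ v, 2 ≤ G.degree v) :
    posSupp (grover G) = (G.nonBacktrackingMat ℝ)ᵀ := by
  ext e f
  have hd : (2 : ℝ) ≤ G.degree e.fst := by exact_mod_cast hdeg e.fst
  simp only [posSupp, grover, transpose_apply, nonBacktrackingMat, of_apply]
  by_cases hback : f = e.symm
  · have hnonpos : ¬ (0 : ℝ) < 2 / G.degree e.fst - 1 := by
      rw [not_lt, sub_nonpos, div_le_one (by linarith)]
      exact hd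
    simp [hback, hnonpos]
  · have hsymm : e ≠ f.symm := fun h => hback (by rw [h, Dart.symm_symm])
    by_cases hf : f.snd = e.fst
    · have hpos : (0 : ℝ) < 2 / G.degree e.fst := by positivity
      simp [hback, hf, hsymm, hpos]
    · simp [hback, hf]

variable [CommRing R]

lemma nonBacktrackingMat_eq :
    G.nonBacktrackingMat R = (G.headMat R)ᵀ * G.tailMat R - G.dartSymmPerm.permMatrix R := by
  ext e f
  simp only [nonBacktrackingMat, headMat, tailMat, dartSymmPerm, Matrix.sub_apply, mul_apply,
    transpose_apply, of_apply, permMatrix_apply, Function.Involutive.coe_toPerm, mul_boole]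
  by_cases h : e.symm = f
  · subst h
    simp
  · simp [h, Ne.symm h]

variable [DecidableRel G.Adj]

lemma permMatrix_dartSymmPerm_mul_transpose_headMat :
    G.dartSymmPerm.permMatrix R * (G.headMat R)ᵀ = (G.tailMat R)ᵀ := by
  ext e v
  simp [PEquiv.toMatrix_toPEquiv_mul, headMat, tailMat, dartSymmPerm]

lemma permMatrix_dartSymmPerm_mul_self :
    G.dartSymmPerm.permMatrix R * G.dartSymmPerm.permMatrix R = 1 := by
  rw [← permMatrix_mul, show G.dartSymmPerm * G.dartSymmPerm = 1 from
    Equiv.ext Dart.symm_symm, permMatrix_one]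

lemma tailMat_mul_transpose_headMat : G.tailMat R * (G.headMat R)ᵀ = G.adjMatrix R := by
  ext v w
  have hdart (e : G.Dart) : (e.fst = v ∧ e.snd = w) ↔ ∃ h : G.Adj v w, e = ⟨(v, w), h⟩ := by
    constructor
    · rintro ⟨rfl, rfl⟩
      exact ⟨e.adj, rfl⟩
    · rintro ⟨h, rfl⟩
      exact ⟨rfl, rfl⟩
  simp only [mul_apply, tailMat, headMat, transpose_apply, of_apply, boole_mul, ← ite_and, hdart]
  by_cases h : G.Adj v w <;> simp [h]

lemma tailMat_mul_transpose_tailMat :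
    G.tailMat R * (G.tailMat R)ᵀ = diagonal fun v => (G.degree v : R) := by
  ext v w
  simp only [mul_apply, tailMat, transpose_apply, of_apply, boole_mul, ← ite_and, diagonal_apply]
  by_cases h : v = w
  · subst h
    simp only [and_self, Finset.sum_boole, dart_fst_fiber_card_eq_degree, if_true]
  · rw [if_neg h]
    exact Finset.sum_eq_zero fun e _ => if_neg fun ⟨hw, hv⟩ => h (hw.symm.trans hv)

lemma det_smul_one_sub_permMatrix_dartSymmPerm (lam : R) :
    det (lam • 1 - G.dartSymmPerm.permMatrix R) = (lam ^ 2 - 1) ^ #G.edgeFinset := by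
  have h := det_smul_one_add_smul_permMatrix_of_involutive G.dartSymmPerm Dart.symm_involutive
    Dart.symm_ne lam (-1)
  rwa [neg_one_smul, ← sub_eq_add_neg, neg_one_sq, dart_card_eq_twice_card_edges,
    Nat.mul_div_cancel_left _ two_pos] at h

lemma smul_one_sub_permMatrix_dartSymmPerm_mul_smul_one_sub_nonBacktrackingMat (lam : R) :
    (lam • 1 - G.dartSymmPerm.permMatrix R) * (lam • 1 - G.nonBacktrackingMat R) =
      (lam ^ 2 - 1) • 1 - (lam • (G.headMat R)ᵀ - (G.tailMat R)ᵀ) * G.tailMat R := by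
  rw [nonBacktrackingMat_eq, ← permMatrix_dartSymmPerm_mul_transpose_headMat]
  simp only [Matrix.sub_mul, Matrix.mul_sub, Matrix.smul_mul, Matrix.mul_smul, Matrix.one_mul,
    Matrix.mul_one, Matrix.mul_assoc, permMatrix_dartSymmPerm_mul_self]
  module

theorem det_smul_one_sub_nonBacktrackingMat_mul (lam : R) :
    det (lam • 1 - G.nonBacktrackingMat R) * (lam ^ 2 - 1) ^ (#G.edgeFinset + Fintype.card V) =
      (lam ^ 2 - 1) ^ (2 * #G.edgeFinset) *
        det ((lam ^ 2 - 1) • 1 - lam • G.adjMatrix R + diagonal fun v => (G.degree v : R)) := by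
  have hcomm : G.tailMat R * (lam • (G.headMat R)ᵀ - (G.tailMat R)ᵀ) =
      lam • G.adjMatrix R - diagonal fun v => (G.degree v : R) := by
    rw [Matrix.mul_sub, Matrix.mul_smul, tailMat_mul_transpose_headMat,
      tailMat_mul_transpose_tailMat]
  calc _ = (lam ^ 2 - 1) ^ Fintype.card V * (det (lam • 1 - G.dartSymmPerm.permMatrix R) *
          det (lam • 1 - G.nonBacktrackingMat R)) := by
        rw [det_smul_one_sub_permMatrix_dartSymmPerm]; ring
    _ = (lam ^ 2 - 1) ^ Fintype.card V * det ((lam ^ 2 - 1) • 1 -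
          (lam • (G.headMat R)ᵀ - (G.tailMat R)ᵀ) * G.tailMat R) := by
        rw [← det_mul, smul_one_sub_permMatrix_dartSymmPerm_mul_smul_one_sub_nonBacktrackingMat]
    _ = (lam ^ 2 - 1) ^ Fintype.card G.Dart * det ((lam ^ 2 - 1) • 1 -
          G.tailMat R * (lam • (G.headMat R)ᵀ - (G.tailMat R)ᵀ)) :=
        det_smul_one_sub_mul_comm _ _ _
    _ = _ := by rw [hcomm, dart_card_eq_twice_card_edges, ← sub_add]

omit [DecidableEq V] in
lemma card_le_card_edgeFinset_of_two_le_degree (hdeg : ∀ v, 2 ≤ G.degree v) :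
    Fintype.card V ≤ #G.edgeFinset := by
  have := G.sum_degrees_eq_twice_card_edges
  have : 2 * Fintype.card V ≤ ∑ v, G.degree v := by
    simpa [mul_comm] using Finset.card_nsmul_le_sum univ _ 2 fun v _ => hdeg v
  omega

theorem det_smul_one_sub_nonBacktrackingMat_of_isRegularOfDegree {K : Type*} [Field K] {k : ℕ}
    (hreg : G.IsRegularOfDegree k) (hk : 2 ≤ k) {lam : K} (hlam : lam ^ 2 - 1 ≠ 0) :
    det (lam • 1 - G.nonBacktrackingMat K) = (lam ^ 2 - 1) ^ (#G.edgeFinset - Fintype.card V) *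
      det (lam ^ 2 • 1 - lam • G.adjMatrix K + ((k : K) - 1) • 1) := by
  have hnm := G.card_le_card_edgeFinset_of_two_le_degree fun v => hreg v ▸ hk
  have hdiag : (diagonal fun v => (G.degree v : K)) = (k : K) • 1 := by
    rw [smul_one_eq_diagonal]; simp [hreg _]
  have hbass := G.det_smul_one_sub_nonBacktrackingMat_mul lam
  have hmat : (lam ^ 2 - 1) • 1 - lam • G.adjMatrix K + (k : K) • 1 =
      lam ^ 2 • 1 - lam • G.adjMatrix K + ((k : K) - 1) • (1 : Matrix V V K) := by
    module
  have hexp : 2 * #G.edgeFinset =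
      (#G.edgeFinset - Fintype.card V) + (#G.edgeFinset + Fintype.card V) := by omega
  rw [hdiag, hmat, hexp, pow_add _ (_ - _), mul_right_comm] at hbass
  exact mul_right_cancel₀ (pow_ne_zero _ hlam) hbass

end SimpleGraph

theorem charpoly_posSupp_grover_general (G : SimpleGraph V) [DecidableRel G.Adj] (k : ℕ)
    (hreg : G.IsRegularOfDegree k) (hk : 2 ≤ k) (lam : ℂ) :
    Matrix.det (lam • (1 : Matrix G.Dart G.Dart ℂ) -
        (posSupp (grover G)).map (fun x : ℝ => (x : ℂ))) =
      (lam ^ 2 - 1) ^ (G.edgeFinset.card - Fintype.card V) *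
        Matrix.det (lam ^ 2 • (1 : Matrix V V ℂ) - lam • G.adjMatrix ℂ +
          ((k : ℂ) - 1) • (1 : Matrix V V ℂ)) := by
  rw [G.posSupp_grover fun v => hreg v ▸ hk, transpose_map,
    G.map_nonBacktrackingMat Complex.ofReal_zero Complex.ofReal_one, ← det_transpose,
    transpose_sub, transpose_smul, transpose_one, transpose_transpose]
  revert lam
  refine funext_iff.mp (Continuous.ext_on ((Set.toFinite {1, -1}).countable.dense_compl ℂ)
    (by fun_prop) (by fun_prop) fun μ hμ => ?_)
  exact G.det_smul_one_sub_nonBacktrackingMat_of_isRegularOfDegree hreg hk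
    (by simpa [sub_eq_zero] using hμ)

/-- Emms–Hancock–Severini–Wilson:  for a connected `k`-regular graph with
`k ≥ 2`, `det(λ I_{2m} - U⁺) = (λ² - 1)^{m-n} det(λ² I_n - λ A + (k-1) I_n)`. -/
theorem charpoly_posSupp_grover (G : SimpleGraph V) [DecidableRel G.Adj] (k : ℕ)
    (hconn : G.Connected) (hreg : G.IsRegularOfDegree k) (hk : 2 ≤ k) (lam : ℂ) :
    Matrix.det (lam • (1 : Matrix G.Dart G.Dart ℂ) -
        (posSupp (grover G)).map (fun x : ℝ => (x : ℂ))) =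
      (lam ^ 2 - 1) ^ (G.edgeFinset.card - Fintype.card V) *
        Matrix.det (lam ^ 2 • (1 : Matrix V V ℂ) - lam • G.adjMatrix ℂ +
          ((k : ℂ) - 1) • (1 : Matrix V V ℂ)) :=
  charpoly_posSupp_grover_general G k hreg hk lam
end

section
/- Let G be a connected k-regular finite simple graph with n vertices and m edges, where k > 2. Then the characteristic polynomial of the positive support (U²)⁺ of the square of the Grover transition matrix satisfies, for every complex number λ, det(λ·I_{2m} − (U²)⁺) = (λ − 2)^{2(m−n)} · det(λ²·I_n − λ·(A(G)² − (2k−4)·I_n) + (A(G)² + (k−2)²·I_n)). Equivalently, (U²)⁺ has 2n eigenvalues of the form λ = (λ_A² − 2k + 4)/2 ± i·λ_A·√(4k − 4 − λ_A²)/2 with λ_A an eigenvalue of A(G), and the remaining 2(m−n) eigenvalues are all equal to 2. -/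
open Matrix SimpleGraph

variable {V : Type*} [Fintype V] [DecidableEq V]

/-!
For `k`-regular `G` with `k > 2`, the entry `(U²) e g` vanishes unless `t g ~ o e`, and then it
is the product `(2/k - [t g = t e]) (2/k - [o g = o e])` along the unique path `g, (t g, o e), e`;
it is positive iff both steps backtrack or neither does. With the `V × D(G)` tail and head
incidence matrices `P, Q` this says `(U²)⁺ = 2 - PᵀP - QᵀQ + PᵀAQ`, so
`λ - (U²)⁺ = (λ - 2) + [Pᵀ Qᵀ] [P - AQ; Q]`. Since `PPᵀ = QQᵀ = k` and `PQᵀ = QPᵀ = A`,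
Sylvester's determinant identity reduces the determinant to that of the `2n × 2n` block matrix
`[[s - A², (1 - k) A], [A, s]]` with `s = λ + k - 2`, which is `det (s (s - A²) + (k - 1) A²)`.
-/

theorem Matrix.det_fromBlocks_smul_one₂₂_of_isRegular {n R : Type*} [Fintype n] [DecidableEq n]
    [CommRing R] (A B C : Matrix n n R) {s : R} (hs : IsRegular (s ^ Fintype.card n)) :
    (fromBlocks A B C (s • 1)).det = (s • A - B * C).det := by
  have hmul : fromBlocks A B C (s • 1) * fromBlocks (s • 1) 0 (-C) 1
      = fromBlocks (s • A - B * C) B 0 (s • (1 : Matrix n n R)) := by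
    simp [fromBlocks_multiply, sub_eq_add_neg]
  have := congrArg det hmul
  rw [det_mul, det_fromBlocks_zero₁₂, det_fromBlocks_zero₂₁, det_smul, det_one] at this
  exact hs.right.eq_iff.mp (by simpa using this)

theorem Matrix.det_fromBlocks_smul_one₂₂ {n R : Type*} [Fintype n] [DecidableEq n] [CommRing R]
    (A B C : Matrix n n R) (s : R) :
    (fromBlocks A B C (s • 1)).det = (s • A - B * C).det := by
  -- the identity holds at the regular element `X` of `R[X]`, hence at every `s`
  have hX := det_fromBlocks_smul_one₂₂_of_isRegular (A.map Polynomial.C) (B.map Polynomial.C)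
    (C.map Polynomial.C) (Polynomial.isRegular_X_pow (R := R) (Fintype.card n))
  have := congrArg (Polynomial.eval s) hX
  rw [← Polynomial.coe_evalRingHom, RingHom.map_det, RingHom.map_det] at this
  convert this using 2
  · ext (i | i) (j | j) <;> by_cases h : i = j <;> simp [h]
  · ext i j
    simp [Matrix.mul_apply, Polynomial.eval_finsetSum]
    ring

theorem Matrix.det_smul_one_add_mul_comm_of_le {m n R : Type*} [Fintype m] [Fintype n]
    [DecidableEq m] [DecidableEq n] [CommRing R] (X : Matrix m n R) (Y : Matrix n m R)
    (hle : Fintype.card n ≤ Fintype.card m) (c : R) :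
    (c • 1 + X * Y).det = c ^ (Fintype.card m - Fintype.card n) * (c • 1 + Y * X).det := by
  have := congrArg (Polynomial.eval c) (charpoly_mul_comm_of_le (-X) Y hle)
  simpa [eval_charpoly, smul_one_eq_diagonal, sub_eq_add_neg] using this

theorem ite_mul_ite_pos_iff {α : Type*} [Ring α] [LinearOrder α] [IsStrictOrderedRing α]
    {a b : α} (ha : a < 0) (hb : 0 < b) (p q : Prop) [Decidable p] [Decidable q] :
    0 < (if p then a else b) * (if q then a else b) ↔ (p ↔ q) := by
  by_cases hp : p <;> by_cases hq : q <;>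
    simp [hp, hq, mul_pos_of_neg_of_neg ha ha, mul_pos hb hb, (mul_neg_of_neg_of_pos ha hb).le,
      (mul_neg_of_pos_of_neg hb ha).le]

namespace SimpleGraph

section DartIncidence

variable (G : SimpleGraph V) (R : Type*)

def dartTailMatrix [Zero R] [One R] : Matrix V G.Dart R := fun v d => if d.fst = v then 1 else 0

def dartHeadMatrix [Zero R] [One R] : Matrix V G.Dart R := fun v d => if d.snd = v then 1 else 0

variable {G R} [CommSemiring R] {ι : Type*}

theorem transpose_dartTailMatrix_mul_apply (M : Matrix V ι R) (d : G.Dart) (j : ι) :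
    ((dartTailMatrix G R)ᵀ * M) d j = M d.fst j := by
  simp [mul_apply, dartTailMatrix]

theorem mul_dartHeadMatrix_apply (M : Matrix ι V R) (i : ι) (d : G.Dart) :
    (M * dartHeadMatrix G R) i d = M i d.snd := by
  simp [mul_apply, dartHeadMatrix]

variable [DecidableRel G.Adj]

theorem dartTailMatrix_mul_transpose :
    dartTailMatrix G R * (dartTailMatrix G R)ᵀ = diagonal fun v => (G.degree v : R) := by
  ext u v
  by_cases huv : u = v
  · subst huv
    simp [mul_apply, dartTailMatrix, ← ite_and, ← G.dart_fst_fiber_card_eq_degree]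
  · simp only [mul_apply, transpose_apply, dartTailMatrix, ite_zero_mul_ite_zero, mul_one,
      diagonal_apply_ne _ huv]
    exact Finset.sum_eq_zero fun d _ => if_neg fun ⟨hu, hv⟩ => huv (hu.symm.trans hv)

theorem dartHeadMatrix_mul_transpose :
    dartHeadMatrix G R * (dartHeadMatrix G R)ᵀ =
      dartTailMatrix G R * (dartTailMatrix G R)ᵀ := by
  ext u v
  exact Fintype.sum_equiv (Function.Involutive.toPerm _ Dart.symm_involutive) _ _ fun _ => rfl

theorem sum_dart_ite_toProd_eq {M : Type*} [AddCommMonoid M] (p : V × V) (f : G.Dart → M) :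
    ∑ d : G.Dart, (if d.toProd = p then f d else 0) =
      if h : G.Adj p.1 p.2 then f ⟨p, h⟩ else 0 := by
  split_ifs with h
  · rw [Finset.sum_eq_single_of_mem (⟨p, h⟩ : G.Dart) (Finset.mem_univ _)
      fun d _ hd => if_neg fun hdp => hd (Dart.ext _ _ hdp), if_pos rfl]
  · exact Finset.sum_eq_zero fun d _ => if_neg fun hdp : d.toProd = p => h (hdp ▸ d.adj)

theorem dartTailMatrix_mul_transpose_dartHeadMatrix :
    dartTailMatrix G R * (dartHeadMatrix G R)ᵀ = G.adjMatrix R := by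
  ext u v
  have := sum_dart_ite_toProd_eq (G := G) (u, v) fun _ => (1 : R)
  simp only [Prod.ext_iff, dite_eq_ite] at this
  simp only [mul_apply, transpose_apply, dartTailMatrix, dartHeadMatrix, ite_zero_mul_ite_zero,
    mul_one, this, adjMatrix_apply]

theorem dartHeadMatrix_mul_transpose_dartTailMatrix :
    dartHeadMatrix G R * (dartTailMatrix G R)ᵀ = G.adjMatrix R := by
  rw [← transpose_transpose (dartHeadMatrix G R * _), transpose_mul, transpose_transpose,
    dartTailMatrix_mul_transpose_dartHeadMatrix, transpose_adjMatrix]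

end DartIncidence

variable {G : SimpleGraph V} [DecidableRel G.Adj]

theorem grover_apply_of_isRegularOfDegree {k : ℕ} (hreg : G.IsRegularOfDegree k)
    (e f : G.Dart) :
    grover G e f =
      if f.snd = e.fst then (if f = e.symm then 2 / k - 1 else 2 / k : ℝ) else 0 := by
  by_cases h : f = e.symm <;> simp [grover, h, hreg.degree_eq]

theorem grover_sq_apply_of_isRegularOfDegree {k : ℕ} (hreg : G.IsRegularOfDegree k)
    (e g : G.Dart) :
    (grover G ^ 2) e g = if G.Adj g.snd e.fst then
      (if g.snd = e.snd then 2 / k - 1 else 2 / k : ℝ) *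
        (if g.fst = e.fst then 2 / k - 1 else 2 / k : ℝ) else 0 := by
  have hterm : ∀ f : G.Dart, grover G e f * grover G f g = if f.toProd = (g.snd, e.fst) then
      (if g.snd = e.snd then 2 / k - 1 else 2 / k : ℝ) *
        (if g.fst = e.fst then 2 / k - 1 else 2 / k : ℝ) else 0 := by
    intro f
    simp only [grover_apply_of_isRegularOfDegree hreg]
    by_cases hf : f.toProd = (g.snd, e.fst)
    · have hsymm : f = e.symm ↔ g.snd = e.snd := by
        simp [Dart.ext_iff, Prod.ext_iff, hf]
      have hsymm' : g = f.symm ↔ g.fst = e.fst := by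
        simp [Dart.ext_iff, Prod.ext_iff, hf]
      simp [hf, hsymm, hsymm']
    · rw [if_neg hf]
      by_cases h1 : f.snd = e.fst
      · rw [if_neg fun h2 : g.snd = f.fst => hf (Prod.ext h2.symm h1), mul_zero]
      · rw [if_neg h1, zero_mul]
  rw [sq, mul_apply, Finset.sum_congr rfl fun f _ => hterm f, sum_dart_ite_toProd_eq]
  rfl

theorem posSupp_grover_sq_apply {k : ℕ} (hreg : G.IsRegularOfDegree k) (hk : 2 < k)
    (e g : G.Dart) :
    posSupp (grover G ^ 2) e g =
      if G.Adj e.fst g.snd ∧ (g.snd = e.snd ↔ g.fst = e.fst) then 1 else 0 := by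
  have hneg : (2 / k - 1 : ℝ) < 0 := by
    rw [sub_neg, div_lt_one (by positivity)]
    exact_mod_cast hk
  have hpos : (0 : ℝ) < 2 / k := by positivity
  simp only [posSupp, grover_sq_apply_of_isRegularOfDegree hreg, G.adj_comm g.snd]
  by_cases hadj : G.Adj e.fst g.snd
  · simp only [hadj, true_and, if_true, ite_mul_ite_pos_iff hneg hpos]
  · simp [hadj]

variable (G) (R : Type*) [CommRing R]

def groverSqSupport : Matrix G.Dart G.Dart R :=
  2 - (dartTailMatrix G R)ᵀ * dartTailMatrix G R - (dartHeadMatrix G R)ᵀ * dartHeadMatrix G R +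
    (dartTailMatrix G R)ᵀ * G.adjMatrix R * dartHeadMatrix G R

variable {G R}

theorem groverSqSupport_apply (e g : G.Dart) :
    groverSqSupport G R e g =
      if G.Adj e.fst g.snd ∧ (g.snd = e.snd ↔ g.fst = e.fst) then 1 else 0 := by
  simp only [groverSqSupport, Matrix.add_apply, Matrix.sub_apply, ofNat_apply,
    transpose_dartTailMatrix_mul_apply, mul_dartHeadMatrix_apply, dartTailMatrix, dartHeadMatrix,
    transpose_apply, adjMatrix_apply]
  have hdart : e = g ↔ g.fst = e.fst ∧ g.snd = e.snd := by
    simp [Dart.ext_iff, Prod.ext_iff, eq_comm]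
  by_cases hfst : g.fst = e.fst <;> by_cases hsnd : g.snd = e.snd
  · obtain rfl : g = e := Dart.ext _ _ (Prod.ext hfst hsnd)
    simp [g.adj]
    norm_num
  · simp [hdart, hfst, hsnd, Ne.symm hsnd, hfst ▸ g.adj]
  · simp [hdart, hfst, hsnd]
  · simp [hdart, hfst, hsnd, Ne.symm hsnd]

theorem posSupp_grover_sq_map_ofReal {k : ℕ} (hreg : G.IsRegularOfDegree k) (hk : 2 < k) :
    (posSupp (grover G ^ 2)).map (fun x : ℝ => (x : ℂ)) = groverSqSupport G ℂ := by
  ext e g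
  simp [posSupp_grover_sq_apply hreg hk, groverSqSupport_apply, apply_ite]

omit [DecidableEq V] in
theorem IsRegularOfDegree.card_le_card_edgeFinset {k : ℕ} (hreg : G.IsRegularOfDegree k)
    (hk : 2 ≤ k) : Fintype.card V ≤ G.edgeFinset.card := by
  have hsum := G.sum_degrees_eq_twice_card_edges
  simp only [hreg.degree_eq, Finset.sum_const, Finset.card_univ, smul_eq_mul] at hsum
  nlinarith

theorem dartTailMatrix_mul_transpose_of_isRegularOfDegree {k : ℕ}
    (hreg : G.IsRegularOfDegree k) :
    dartTailMatrix G R * (dartTailMatrix G R)ᵀ = (k : R) • 1 := by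
  rw [dartTailMatrix_mul_transpose, smul_one_eq_diagonal]
  simp only [hreg.degree_eq]

theorem det_smul_one_sub_groverSqSupport {k : ℕ} (hreg : G.IsRegularOfDegree k)
    (hle : Fintype.card V ≤ G.edgeFinset.card) (lam : R) :
    (lam • 1 - groverSqSupport G R).det =
      (lam - 2) ^ (2 * (G.edgeFinset.card - Fintype.card V)) *
        (lam ^ 2 • 1 - lam • ((G.adjMatrix R) ^ 2 - (2 * (k : R) - 4) • 1) +
          ((G.adjMatrix R) ^ 2 + ((k : R) - 2) ^ 2 • 1)).det := by
  set P := dartTailMatrix G R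
  set Q := dartHeadMatrix G R
  set A := G.adjMatrix R
  have hfactor : lam • 1 - groverSqSupport G R =
      (lam - 2) • 1 + fromCols Pᵀ Qᵀ * fromRows (P - A * Q) Q := by
    rw [fromCols_mul_fromRows, groverSqSupport, sub_smul, two_smul, one_add_one_eq_two,
      Matrix.mul_sub, ← Matrix.mul_assoc]
    abel
  have hswap : (lam - 2) • 1 + fromRows (P - A * Q) Q * fromCols Pᵀ Qᵀ =
      fromBlocks ((lam + k - 2) • 1 - A * A) ((1 - k : R) • A) A ((lam + k - 2) • 1) := by
    rw [fromRows_mul_fromCols, Matrix.sub_mul, Matrix.sub_mul, Matrix.mul_assoc, Matrix.mul_assoc,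
      dartTailMatrix_mul_transpose_of_isRegularOfDegree hreg, dartHeadMatrix_mul_transpose,
      dartTailMatrix_mul_transpose_of_isRegularOfDegree hreg,
      dartTailMatrix_mul_transpose_dartHeadMatrix, dartHeadMatrix_mul_transpose_dartTailMatrix,
      Matrix.mul_smul, Matrix.mul_one, ← fromBlocks_one, fromBlocks_smul, fromBlocks_add]
    congr 1 <;> module
  have hle' : Fintype.card (V ⊕ V) ≤ Fintype.card G.Dart := by
    rw [dart_card_eq_twice_card_edges, Fintype.card_sum]
    omega
  have hcard : Fintype.card G.Dart - Fintype.card (V ⊕ V) =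
      2 * (G.edgeFinset.card - Fintype.card V) := by
    rw [dart_card_eq_twice_card_edges, Fintype.card_sum]
    omega
  rw [hfactor, det_smul_one_add_mul_comm_of_le _ _ hle', hswap, det_fromBlocks_smul_one₂₂,
    hcard]
  congr 2
  rw [Matrix.smul_mul, sq A]
  module

end SimpleGraph

theorem charpoly_posSupp_grover_sq_general (G : SimpleGraph V) [DecidableRel G.Adj] (k : ℕ)
    (hreg : G.IsRegularOfDegree k) (hk : 2 < k) (lam : ℂ) :
    Matrix.det (lam • (1 : Matrix G.Dart G.Dart ℂ) -
        (posSupp ((grover G) ^ 2)).map (fun x : ℝ => (x : ℂ))) =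
      (lam - 2) ^ (2 * (G.edgeFinset.card - Fintype.card V)) *
        Matrix.det (lam ^ 2 • (1 : Matrix V V ℂ) -
          lam • ((G.adjMatrix ℂ) ^ 2 - (2 * (k : ℂ) - 4) • (1 : Matrix V V ℂ)) +
          ((G.adjMatrix ℂ) ^ 2 + ((k : ℂ) - 2) ^ 2 • (1 : Matrix V V ℂ))) := by
  rw [posSupp_grover_sq_map_ofReal hreg hk,
    det_smul_one_sub_groverSqSupport hreg (hreg.card_le_card_edgeFinset hk.le)]

/-- Emms–Hancock–Severini–Wilson: characteristic polynomial of `(U²)⁺` for a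
connected `k`-regular graph with `k > 2`. -/
theorem charpoly_posSupp_grover_sq (G : SimpleGraph V) [DecidableRel G.Adj] (k : ℕ)
    (hconn : G.Connected) (hreg : G.IsRegularOfDegree k) (hk : 2 < k) (lam : ℂ) :
    Matrix.det (lam • (1 : Matrix G.Dart G.Dart ℂ) -
        (posSupp ((grover G) ^ 2)).map (fun x : ℝ => (x : ℂ))) =
      (lam - 2) ^ (2 * (G.edgeFinset.card - Fintype.card V)) *
        Matrix.det (lam ^ 2 • (1 : Matrix V V ℂ) -
          lam • ((G.adjMatrix ℂ) ^ 2 - (2 * (k : ℂ) - 4) • (1 : Matrix V V ℂ)) +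
          ((G.adjMatrix ℂ) ^ 2 + ((k : ℂ) - 2) ^ 2 • (1 : Matrix V V ℂ))) :=
  charpoly_posSupp_grover_sq_general G k hreg hk lam
end

section
/- Let G be a finite simple graph with minimum degree δ(G) ≥ 2 and let U be its Grover transition matrix. Then the positive support of the transpose of U equals the edge matrix: (Uᵀ)⁺ = B − J₀. Equivalently, U⁺ = Bᵀ − J₀. -/
open Matrix SimpleGraph

variable {V : Type*} [Fintype V] [DecidableEq V]

/- Off the reversed arc, every nonzero entry of `U` is `2 / deg (o e)`, which is positive, and
it sits exactly where `t(f) = o(e)`; on the reversed arc the entry `2 / deg - 1` is nonpositive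
precisely because `deg ≥ 2`. So `U⁺ = Bᵀ - J₀`, and transposing, with `J₀ᵀ = J₀`, gives
`(Uᵀ)⁺ = B - J₀`. -/

theorem posSupp_transpose {α : Type*} (M : Matrix α α ℝ) : posSupp Mᵀ = (posSupp M)ᵀ := rfl

namespace SimpleGraph

theorem Dart.eq_symm_comm {W : Type*} {H : SimpleGraph W} {e f : H.Dart} :
    e = f.symm ↔ f = e.symm := by
  constructor <;> rintro rfl <;> exact (Dart.symm_symm _).symm

variable (G : SimpleGraph V) [DecidableRel G.Adj]

omit [Fintype V] in
theorem J0_transpose : (J0 G)ᵀ = J0 G := by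
  ext e f
  simp only [transpose_apply, J0, Dart.eq_symm_comm]

theorem grover_apply_symm_nonpos (hδ : ∀ v : V, 2 ≤ G.degree v) (e : G.Dart) :
    grover G e e.symm ≤ 0 := by
  have hdeg : 0 < G.degree e.fst := by linarith [hδ e.fst]
  rw [grover, if_pos rfl, sub_nonpos, div_le_one (by positivity)]
  exact_mod_cast hδ e.fst

theorem grover_apply_pos {e f : G.Dart} (hfe : f ≠ e.symm) (hf : f.snd = e.fst) :
    0 < grover G e f := by
  have hdeg : 0 < G.degree e.fst := (G.degree_pos_iff_exists_adj e.fst).2 ⟨e.snd, e.adj⟩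
  rw [grover, if_neg hfe, if_pos hf]
  positivity

theorem grover_apply_eq_zero {e f : G.Dart} (hf : f.snd ≠ e.fst) : grover G e f = 0 := by
  have hfe : f ≠ e.symm := by rintro rfl; exact hf rfl
  rw [grover, if_neg hfe, if_neg hf]

theorem posSupp_grover_s2 (hδ : ∀ v : V, 2 ≤ G.degree v) :
    posSupp (grover G) = (Bmat G)ᵀ - J0 G := by
  ext e f
  simp only [posSupp, Matrix.sub_apply, transpose_apply, Bmat, J0]
  by_cases hfe : f = e.symm
  · subst hfe
    simp [(grover_apply_symm_nonpos G hδ e).not_gt]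
  by_cases hf : f.snd = e.fst
  · simp [grover_apply_pos G hfe hf, hfe, hf]
  · simp [grover_apply_eq_zero G hf, hfe, hf]

end SimpleGraph

/-- Ren–Aleksic–Emms–Wilson–Hancock: if `δ(G) ≥ 2` then
`(Uᵀ)⁺ = B - J₀`, equivalently `U⁺ = Bᵀ - J₀`. -/
theorem posSupp_transpose_grover_eq_edge_matrix (G : SimpleGraph V) [DecidableRel G.Adj]
    (hδ : ∀ v : V, 2 ≤ G.degree v) :
    posSupp ((grover G)ᵀ) = Bmat G - J0 G ∧
      posSupp (grover G) = (Bmat G)ᵀ - J0 G := by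
  have hU := G.posSupp_grover_s2 hδ
  refine ⟨?_, hU⟩
  rw [posSupp_transpose, hU, transpose_sub, transpose_transpose, G.J0_transpose]
end

section
/- Let G be a connected k-regular finite simple graph with m edges, where k > 2, and let U be its Grover transition matrix. Then the positive support of the square of U satisfies (U²)⁺ = (U⁺)² + I_{2m}. -/
open Matrix SimpleGraph

variable {V : Type*} [Fintype V] [DecidableEq V]

/-!
In a simple graph the only dart `f` with `t(f) = o(e)` and `t(g) = o(f)` is `f = (t(g), o(e))`,
so `(U²)_{eg}` and `((U⁺)²)_{eg}` each reduce to the single term through this `f`. When the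
degrees exceed `2`, such an entry `U_{ef}` is negative for `f = e⁻¹` and positive otherwise.
Hence `U_{ef} U_{fg} > 0` exactly when both factors are positive, giving `((U⁺)²)_{eg}`, or both
are negative, i.e. `f = e⁻¹` and `g = f⁻¹`, which happens exactly when `g = e`.
-/

lemma posSupp_apply {α : Type*} (M : Matrix α α ℝ) (i j : α) :
    posSupp M i j = if 0 < M i j then 1 else 0 := rfl

lemma ite_pos_mul_eq_of_ne_zero {a b : ℝ} (ha : a ≠ 0) (hb : b ≠ 0) :
    (if 0 < a * b then (1 : ℝ) else 0) =
      (if 0 < a then 1 else 0) * (if 0 < b then 1 else 0) + if a < 0 ∧ b < 0 then 1 else 0 := by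
  rcases ha.lt_or_gt with ha | ha <;> rcases hb.lt_or_gt with hb | hb <;>
    simp [mul_pos_iff, ha, hb, ha.not_gt, hb.not_gt]

lemma mul_apply_eq_dite_adj {R : Type*} [NonUnitalNonAssocSemiring R] {G : SimpleGraph V}
    [DecidableRel G.Adj] {M N : Matrix G.Dart G.Dart R}
    (hM : ∀ e f : G.Dart, f.snd ≠ e.fst → M e f = 0)
    (hN : ∀ e f : G.Dart, f.snd ≠ e.fst → N e f = 0) (e g : G.Dart) :
    (M * N) e g =
      if h : G.Adj g.snd e.fst then M e ⟨(g.snd, e.fst), h⟩ * N ⟨(g.snd, e.fst), h⟩ g else 0 := by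
  have hterm : ∀ f : G.Dart, f.toProd ≠ (g.snd, e.fst) → M e f * N f g = 0 := by
    intro f hf
    by_cases hfe : f.snd = e.fst
    · rw [hN f g fun hgf => hf (Prod.ext hgf.symm hfe), mul_zero]
    · rw [hM e f hfe, zero_mul]
  rw [Matrix.mul_apply]
  split_ifs with h
  · refine Finset.sum_eq_single _ (fun f _ hf => hterm f fun hf' => hf ?_) (by simp)
    exact Dart.ext _ _ hf'
  · exact Finset.sum_eq_zero fun f _ => hterm f fun hf => h (by simpa [hf] using f.adj)

section grover

variable {G : SimpleGraph V} [DecidableRel G.Adj]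

lemma grover_apply_of_snd_ne {e f : G.Dart} (h : f.snd ≠ e.fst) : grover G e f = 0 := by
  have hf : f ≠ e.symm := by rintro rfl; exact h rfl
  simp [grover, hf, h]

lemma posSupp_grover_apply_of_snd_ne {e f : G.Dart} (h : f.snd ≠ e.fst) :
    posSupp (grover G) e f = 0 := by
  simp [posSupp, grover_apply_of_snd_ne h]

lemma grover_apply_symm_neg {e : G.Dart} (hdeg : 2 < G.degree e.fst) :
    grover G e e.symm < 0 := by
  have hdeg' : (2 : ℝ) < G.degree e.fst := by exact_mod_cast hdeg
  rw [grover, if_pos rfl, sub_neg, div_lt_one (by linarith)]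
  exact hdeg'

lemma grover_apply_pos {e f : G.Dart} (hfe : f.snd = e.fst) (hf : f ≠ e.symm) :
    0 < grover G e f := by
  have : (0 : ℝ) < G.degree e.fst := by exact_mod_cast e.adj.degree_pos_left
  rw [grover, if_neg hf, if_pos hfe]
  positivity

lemma grover_apply_neg_iff {e f : G.Dart} (hdeg : 2 < G.degree e.fst) (hfe : f.snd = e.fst) :
    grover G e f < 0 ↔ f = e.symm := by
  refine ⟨fun hneg => ?_, fun hf => hf ▸ grover_apply_symm_neg hdeg⟩
  by_contra hf
  exact (grover_apply_pos hfe hf).not_gt hneg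

lemma grover_apply_ne_zero {e f : G.Dart} (hdeg : 2 < G.degree e.fst) (hfe : f.snd = e.fst) :
    grover G e f ≠ 0 := by
  by_cases hf : f = e.symm
  · exact hf ▸ (grover_apply_symm_neg hdeg).ne
  · exact (grover_apply_pos hfe hf).ne'

end grover

theorem posSupp_grover_sq_general (G : SimpleGraph V) [DecidableRel G.Adj] (k : ℕ)
    (hreg : G.IsRegularOfDegree k) (hk : 2 < k) :
    posSupp ((grover G) ^ 2) = (posSupp (grover G)) ^ 2 + 1 := by
  have hdeg : ∀ v, 2 < G.degree v := fun v => hreg v ▸ hk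
  ext e g
  simp only [sq, Matrix.add_apply, Matrix.one_apply]
  rw [posSupp_apply (grover G * grover G),
    mul_apply_eq_dite_adj (M := grover G) (N := grover G)
      (fun _ _ => grover_apply_of_snd_ne) (fun _ _ => grover_apply_of_snd_ne),
    mul_apply_eq_dite_adj (M := posSupp (grover G)) (N := posSupp (grover G))
      (fun _ _ => posSupp_grover_apply_of_snd_ne) (fun _ _ => posSupp_grover_apply_of_snd_ne)]
  by_cases h : G.Adj g.snd e.fst
  · rw [dif_pos h, dif_pos h]
    set f : G.Dart := ⟨(g.snd, e.fst), h⟩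
    have hsign : grover G e f < 0 ∧ grover G f g < 0 ↔ e = g := by
      rw [grover_apply_neg_iff (f := f) (hdeg _) rfl, grover_apply_neg_iff (e := f) (hdeg _) rfl]
      simp only [f, Dart.ext_iff, Prod.ext_iff]
      tauto
    rw [posSupp_apply, posSupp_apply, ← if_congr hsign rfl rfl]
    exact ite_pos_mul_eq_of_ne_zero (grover_apply_ne_zero (f := f) (hdeg _) rfl)
      (grover_apply_ne_zero (e := f) (hdeg _) rfl)
  · have hne : e ≠ g := by rintro rfl; exact h e.adj.symm
    simp [dif_neg h, posSupp, hne]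

/-- Godsil–Guo: for a connected `k`-regular graph with `k > 2`,
`(U²)⁺ = (U⁺)² + I_{2m}`. -/
theorem posSupp_grover_sq (G : SimpleGraph V) [DecidableRel G.Adj] (k : ℕ)
    (hconn : G.Connected) (hreg : G.IsRegularOfDegree k) (hk : 2 < k) :
    posSupp ((grover G) ^ 2) = (posSupp (grover G)) ^ 2 + 1 :=
  posSupp_grover_sq_general G k hreg hk
end

section
/- Let G be a finite connected simple graph with m edges and minimum degree δ(G) ≥ 2, and let U be its Grover transition matrix. Then for every real number u, det(I_{2m} − u·U⁺) = det(I_{2m} − u·(B − J₀)); that is, the reciprocal of the Ihara zeta function of G equals det(I_{2m} − u·U⁺). -/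
open Matrix SimpleGraph

variable {V : Type*} [Fintype V] [DecidableEq V]

/-- for a connected graph with `δ(G) ≥ 2`, the reciprocal of the Ihara zeta
function equals `det(I_{2m} - u U⁺)`, i.e. `det(I - u U⁺) = det(I - u (B - J₀))`. -/
theorem det_posSupp_grover_eq_ihara (G : SimpleGraph V) [DecidableRel G.Adj]
    (hconn : G.Connected) (hδ : ∀ v : V, 2 ≤ G.degree v) (u : ℝ) :
    Matrix.det ((1 : Matrix G.Dart G.Dart ℝ) - u • posSupp (grover G)) =
      Matrix.det ((1 : Matrix G.Dart G.Dart ℝ) - u • (Bmat G - J0 G)) := by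
  have hps : posSupp (grover G) = (Bmat G - J0 G)ᵀ := by
    funext e f
    have hdeg : (2 : ℝ) ≤ (G.degree e.toProd.1 : ℝ) := by
      exact_mod_cast hδ e.toProd.1
    have hpos : (0 : ℝ) < (G.degree e.toProd.1 : ℝ) := by linarith
    simp only [posSupp, grover, Matrix.transpose_apply, Matrix.sub_apply, Bmat, J0]
    have hsymm : f = e.symm ↔ e = f.symm := by
      constructor <;> rintro rfl <;> simp
    by_cases h1 : f = e.symm
    · subst h1
      have : ¬ (0 : ℝ) < 2 / (G.degree e.toProd.1 : ℝ) - 1 := by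
        have : 2 / (G.degree e.toProd.1 : ℝ) ≤ 1 := by
          rw [div_le_one hpos]; linarith
        linarith
      simp [this]
    · have h1' : ¬ e = f.symm := fun h => h1 (by rw [hsymm]; exact h)
      by_cases h2 : f.toProd.2 = e.toProd.1
      · have : (0:ℝ) < 2 / (G.degree e.toProd.1 : ℝ) := by positivity
        simp [h1, h1', h2, this]
      · have h2' : ¬ (f.toProd.2 = e.toProd.1) := h2
        simp [h1, h1', h2, fun h => h2 (Eq.symm h)]
  rw [hps]
  have : (1 : Matrix G.Dart G.Dart ℝ) - u • (Bmat G - J0 G)ᵀ =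
      ((1 : Matrix G.Dart G.Dart ℝ) - u • (Bmat G - J0 G))ᵀ := by
    simp [Matrix.transpose_sub, Matrix.transpose_smul]
  rw [this, Matrix.det_transpose]
end

section
/- Let G be a connected k-regular finite simple graph with m edges, where k > 2 and the girth g(G) > 4. Then the nonnegative matrix (U³)⁺ is irreducible: for all arcs e, f ∈ D(G) there exists an integer r ≥ 1 such that the (e,f) entry of ((U³)⁺)^r is positive. (Equivalently, the underlying digraph of (U³)⁺ is strongly connected.) -/
open Matrix SimpleGraph

variable {V : Type*} [Fintype V] [DecidableEq V]

section Aux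

variable (G : SimpleGraph V) [DecidableRel G.Adj]

set_option linter.unusedSectionVars false

lemma no4cycle (hg : 4 < G.egirth) {u v z p : V} (h1 : G.Adj u v)
    (h2 : G.Adj v z) (h3 : G.Adj z p) (h4 : G.Adj p u) (huz : u ≠ z) (hvp : v ≠ p) : False := by
  have hw : (Walk.cons h1 (Walk.cons h2 (Walk.cons h3 h4.toWalk))).IsCycle := by
    have n1 := h1.ne; have n2 := h2.ne; have n3 := h3.ne; have n4 := h4.ne
    simp [Walk.isCycle_def, Walk.isTrail_def, List.nodup_cons, Sym2.eq_iff]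
    aesop
  have hle : G.egirth ≤ ((Walk.cons h1 (Walk.cons h2 (Walk.cons h3 h4.toWalk))).length : ℕ∞) :=
    iInf_le_of_le u <| iInf_le_of_le _ <| iInf_le _ hw
  simp only [Walk.length_cons] at hle
  norm_num at hle
  exact (lt_irrefl _ (lt_of_lt_of_le hg hle)).elim

lemma grover_snd {a x : G.Dart} (h : grover G a x ≠ 0) : x.toProd.2 = a.toProd.1 := by
  by_contra hne
  have hxs : x ≠ a.symm := by
    intro he; exact hne (by subst he; simp)
  simp [grover, hxs, hne] at h

lemma cube_apply (a b : G.Dart) :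
    ((grover G) ^ 3) a b = ∑ y : G.Dart, ∑ x : G.Dart,
      grover G a x * grover G x y * grover G y b := by
  have h3 : (grover G) ^ 3 = (grover G) * (grover G) * (grover G) := by
    rw [pow_succ, pow_two]
  rw [h3, Matrix.mul_apply]
  refine Finset.sum_congr rfl fun y _ => ?_
  rw [Matrix.mul_apply, Finset.sum_mul]

variable {k : ℕ} (hreg : G.IsRegularOfDegree k) (hk : 2 < k) (hg : 4 < G.egirth)

include hreg hk in
lemma ckpos : (0:ℝ) < 2 / k ∧ 2 / (k:ℝ) - 1 < 0 := by
  have hk0 : (0:ℝ) < k := by exact_mod_cast Nat.zero_lt_of_lt hk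
  constructor
  · positivity
  · rw [sub_neg, div_lt_one hk0]
    exact_mod_cast hk

include hreg hk hg in
lemma cube_pos_fwd {a b : G.Dart} (hab : a.toProd.2 = b.toProd.1) (hb : b ≠ a.symm) :
    0 < ((grover G) ^ 3) a b := by
  rw [cube_apply]
  have huz : a.toProd.1 ≠ b.toProd.2 := by
    intro h; apply hb; ext : 1; rw [Prod.ext_iff]
    constructor
    · simp [hab.symm]
    · simp [h.symm]
  rw [Fintype.sum_eq_single b.symm ?_]
  · rw [Fintype.sum_eq_single a.symm ?_]
    · have hd : ∀ v, (G.degree v : ℝ) = (k : ℝ) := fun v => by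
        rw [hreg v]
      have e1 : grover G a a.symm = 2 / (k:ℝ) - 1 := by simp [grover, hd]
      have e2 : grover G a.symm b.symm = 2 / (k:ℝ) := by
        have hne : ¬ (b.symm = a) := by
          intro h; apply hb; rw [← h]; simp
        have hab' : b.toProd.1 = a.toProd.2 := hab.symm
        simp [grover, hne, hab', hd]
      have e3 : grover G b.symm b = 2 / (k:ℝ) - 1 := by
        have hbb : b = b.symm.symm := by simp
        simp [grover, ← hbb, hd]
      rw [e1, e2, e3]
      obtain ⟨h1, h2⟩ := ckpos G hreg hk
      nlinarith [mul_pos h1 (mul_pos_of_neg_of_neg h2 h2)]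
    · intro x hx
      by_cases hax : grover G a x = 0
      · simp [hax]
      by_cases hxy : grover G x b.symm = 0
      · simp [hxy]
      exfalso
      have f3 := grover_snd G hax
      have f2 := grover_snd G hxy
      apply hx
      ext : 1
      rw [Prod.ext_iff]
      refine ⟨?_, ?_⟩
      · simpa [hab.symm] using f2.symm
      · simpa using f3
  · intro y hy
    refine Finset.sum_eq_zero fun x _ => ?_
    by_cases hyb : grover G y b = 0
    · simp [hyb]
    by_cases hax : grover G a x = 0
    · simp [hax]
    by_cases hxy : grover G x y = 0
    · simp [hxy]
    exfalso
    have f1 := grover_snd G hyb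
    have f2 := grover_snd G hxy
    have f3 := grover_snd G hax
    have hvp : a.toProd.2 ≠ y.toProd.2 := by
      intro h
      apply hy
      ext : 1
      rw [Prod.ext_iff]
      exact ⟨by simpa using f1.symm, by simp [← h, hab]⟩
    refine no4cycle G hg a.adj (u := a.toProd.1) (v := a.toProd.2) (z := b.toProd.2)
      (p := y.toProd.2) ?_ ?_ ?_ huz hvp
    · rw [hab]; exact b.adj
    · rw [f1]; exact y.adj
    · have := x.adj; rw [f3] at this; rw [← f2] at this; exact this

include hreg hk hg in
lemma cube_pos_bwd {a b x y : G.Dart}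
    (h1 : b.toProd.2 = y.toProd.1) (h2 : y.toProd.2 = x.toProd.1)
    (h3 : x.toProd.2 = a.toProd.1)
    (n1 : y ≠ b.symm) (n2 : x ≠ y.symm) (n3 : a ≠ x.symm) :
    0 < ((grover G) ^ 3) a b := by
  have hd : ∀ v, (G.degree v : ℝ) = (k : ℝ) := fun v => by rw [hreg v]
  -- v1 ≠ v3
  have h13 : y.toProd.1 ≠ x.toProd.2 := by
    intro h
    apply n2
    ext : 1
    rw [Prod.ext_iff]
    exact ⟨by simp [h2], by simp [← h]⟩
  rw [cube_apply]
  rw [Fintype.sum_eq_single y ?_]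
  · rw [Fintype.sum_eq_single x ?_]
    · have e1 : grover G a x = 2 / (k:ℝ) := by
        have hne : ¬ (x = a.symm) := by
          intro h; apply n3; rw [h]; simp
        simp [grover, hne, h3, hd]
      have e2 : grover G x y = 2 / (k:ℝ) := by
        have hne : ¬ (y = x.symm) := by
          intro h; apply n2; rw [h]; simp
        simp [grover, hne, h2, hd]
      have e3 : grover G y b = 2 / (k:ℝ) := by
        have hne : ¬ (b = y.symm) := by
          intro h; apply n1; rw [h]; simp
        simp [grover, hne, h1, hd]
      rw [e1, e2, e3]
      obtain ⟨hp, _⟩ := ckpos G hreg hk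
      positivity
    · intro x' hx'
      by_cases hax : grover G a x' = 0
      · simp [hax]
      by_cases hxy : grover G x' y = 0
      · simp [hxy]
      exfalso
      have f3 := grover_snd G hax
      have f2 := grover_snd G hxy
      apply hx'
      ext : 1
      rw [Prod.ext_iff]
      exact ⟨by rw [← f2, h2], by rw [f3, ← h3]⟩
  · intro y' hy'
    refine Finset.sum_eq_zero fun x' _ => ?_
    by_cases hyb : grover G y' b = 0
    · simp [hyb]
    by_cases hax : grover G a x' = 0
    · simp [hax]
    by_cases hxy : grover G x' y' = 0
    · simp [hxy]
    exfalso
    have f1 := grover_snd G hyb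
    have f2 := grover_snd G hxy
    have f3 := grover_snd G hax
    -- p := y'.2 ≠ v2 = y.2
    have hp2 : y'.toProd.2 ≠ y.toProd.2 := by
      intro h
      apply hy'
      ext : 1
      rw [Prod.ext_iff]
      exact ⟨by rw [← f1, h1], h⟩
    -- 4-cycle v1 v2 v3 p
    refine no4cycle G hg (u := y.toProd.1) (v := y.toProd.2) (z := x.toProd.2)
      (p := y'.toProd.2) ?_ ?_ ?_ ?_ h13 (fun h => hp2 h.symm)
    · exact y.adj
    · have := x.adj; rw [← h2] at this; exact this
    · -- Adj x.2 y'.2 : from x'.adj : Adj x'.1 x'.2 with x'.1 = y'.2, x'.2 = a.1 = x.2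
      have := x'.adj
      rw [← f2, f3, ← h3] at this
      exact this.symm
    · -- Adj y'.2 y.1 : y'.adj : Adj y'.1 y'.2, y'.1 = b.2 = y.1
      have := y'.adj
      rw [← f1, h1] at this
      exact this.symm

include hreg hk in
lemma exists_nbr_avoid (v u1 u2 : V) : ∃ w, G.Adj v w ∧ w ≠ u1 ∧ w ≠ u2 := by
  have hcard : (G.neighborFinset v).card = k := hreg v
  have hne : ((G.neighborFinset v) \ {u1, u2}).Nonempty := by
    rw [← Finset.card_pos]
    have h1 := Finset.card_sdiff_add_card (s := G.neighborFinset v) (t := {u1, u2})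
    have h2 : ({u1, u2} : Finset V).card ≤ 2 :=
      le_trans (Finset.card_insert_le _ _) (by simp)
    have h3 : (G.neighborFinset v).card ≤ ((G.neighborFinset v) ∪ {u1, u2}).card :=
      Finset.card_le_card Finset.subset_union_left
    omega
  obtain ⟨w, hw⟩ := hne
  rw [Finset.mem_sdiff, mem_neighborFinset] at hw
  refine ⟨w, hw.1, ?_, ?_⟩ <;> · intro h; apply hw.2; simp [h]

include hreg hk in
lemma succ_exists (a : G.Dart) : ∃ b : G.Dart, a.toProd.2 = b.toProd.1 ∧ b ≠ a.symm := by
  obtain ⟨w, hadj, hw, -⟩ := exists_nbr_avoid G hreg hk a.toProd.2 a.toProd.1 a.toProd.1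
  refine ⟨⟨(a.toProd.2, w), hadj⟩, rfl, ?_⟩
  intro h
  have := congrArg (fun d => d.toProd.2) h
  simp at this
  exact hw this

include hreg hk hg in
lemma reach_pred {p a : G.Dart} (h : p.toProd.2 = a.toProd.1) (hna : a ≠ p.symm) :
    Relation.ReflTransGen (fun x y => 0 < ((grover G) ^ 3) x y) a p := by
  obtain ⟨b, hab, hb⟩ := succ_exists G hreg hk a
  obtain ⟨c, hbc, hc⟩ := succ_exists G hreg hk b
  have s1 := cube_pos_fwd G hreg hk hg hab hb
  have s2 := cube_pos_fwd G hreg hk hg hbc hc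
  have s3 := cube_pos_bwd G hreg hk hg h hab hbc hna hb hc
  exact Relation.ReflTransGen.head s1 (Relation.ReflTransGen.head s2
    (Relation.ReflTransGen.single s3))

include hreg hk hg in
lemma reach_symm (a : G.Dart) :
    Relation.ReflTransGen (fun x y => 0 < ((grover G) ^ 3) x y) a a.symm := by
  obtain ⟨w, hw, hwu, -⟩ := exists_nbr_avoid G hreg hk a.toProd.2 a.toProd.1 a.toProd.1
  obtain ⟨x, hx, hxu, hxw⟩ := exists_nbr_avoid G hreg hk a.toProd.2 a.toProd.1 w
  set b : G.Dart := ⟨(a.toProd.2, w), hw⟩ with hbdef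
  set q : G.Dart := ⟨(x, a.toProd.2), hx.symm⟩ with hqdef
  have s1 : 0 < ((grover G) ^ 3) a b := by
    refine cube_pos_fwd G hreg hk hg rfl ?_
    intro h
    have := congrArg (fun d => d.toProd.2) h
    simp [hbdef] at this
    exact hwu this
  have s2 : Relation.ReflTransGen (fun x y => 0 < ((grover G) ^ 3) x y) b q := by
    refine reach_pred G hreg hk hg rfl ?_
    intro h
    have := congrArg (fun d => d.toProd.2) h
    simp [hbdef, hqdef] at this
    exact hxw this.symm
  have s3 : 0 < ((grover G) ^ 3) q a.symm := by
    refine cube_pos_fwd G hreg hk hg rfl ?_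
    intro h
    have := congrArg (fun d => d.toProd.2) h
    simp [hqdef] at this
    exact hxu this.symm
  exact Relation.ReflTransGen.head s1 (s2.trans (Relation.ReflTransGen.single s3))

include hreg hk hg in
lemma reach_step (a f : G.Dart) (h : a.toProd.2 = f.toProd.1) :
    Relation.ReflTransGen (fun x y => 0 < ((grover G) ^ 3) x y) a f := by
  by_cases hf : f = a.symm
  · subst hf; exact reach_symm G hreg hk hg a
  · exact Relation.ReflTransGen.single (cube_pos_fwd G hreg hk hg h hf)

include hreg hk hg in
lemma reach_of_walk : ∀ {u v : V} (_ : G.Walk u v) (a f : G.Dart),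
    a.toProd.2 = u → f.toProd.1 = v →
    Relation.ReflTransGen (fun x y => 0 < ((grover G) ^ 3) x y) a f := by
  intro u v w
  induction w with
  | nil => exact fun a f h1 h2 => reach_step G hreg hk hg a f (h1.trans h2.symm)
  | @cons u' v' w' hadj p ih =>
      intro a f h1 h2
      have hd : Relation.ReflTransGen (fun x y => 0 < ((grover G) ^ 3) x y) a
          ⟨(u', v'), hadj⟩ := reach_step G hreg hk hg a _ (by rw [h1])
      exact hd.trans (ih _ f rfl h2)

end Aux

/-- Proposition 6.3: for a connected `k`-regular graph with `k > 2` and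
girth `> 4`, the nonnegative matrix `(U³)⁺` is irreducible: its underlying digraph is
strongly connected. -/
theorem posSupp_grover_cube_irreducible (G : SimpleGraph V) [DecidableRel G.Adj] (k : ℕ)
    (hconn : G.Connected) (hreg : G.IsRegularOfDegree k) (hk : 2 < k)
    (hg : 4 < G.egirth) :
    ∀ e f : G.Dart, ∃ r : ℕ, 1 ≤ r ∧ 0 < ((posSupp ((grover G) ^ 3)) ^ r) e f := by
  intro e f
  set M := posSupp ((grover G) ^ 3) with hM
  have hM0 : ∀ i j : G.Dart, 0 ≤ M i j := by
    intro i j; rw [hM]; simp only [posSupp]; split <;> norm_num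
  have hpow : ∀ (r : ℕ) (i j : G.Dart), 0 ≤ (M ^ r) i j := by
    intro r
    induction r with
    | zero =>
        intro i j; rw [pow_zero, Matrix.one_apply]; split <;> norm_num
    | succ n ih =>
        intro i j; rw [pow_succ, Matrix.mul_apply]
        exact Finset.sum_nonneg fun c _ => mul_nonneg (ih i c) (hM0 c j)
  have key : ∀ {x y : G.Dart},
      Relation.ReflTransGen (fun p q => 0 < ((grover G) ^ 3) p q) x y →
      ∃ r : ℕ, 0 < (M ^ r) x y := by
    intro x y h
    induction h with
    | refl => exact ⟨0, by rw [pow_zero, Matrix.one_apply_eq]; norm_num⟩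
    | @tail b c hb hstep ih =>
        obtain ⟨r, hr⟩ := ih
        refine ⟨r + 1, ?_⟩
        rw [pow_succ, Matrix.mul_apply]
        refine Finset.sum_pos' (fun i _ => mul_nonneg (hpow r _ _) (hM0 _ _))
          ⟨b, Finset.mem_univ _, ?_⟩
        have hMb : M b c = 1 := by rw [hM]; simp only [posSupp]; rw [if_pos hstep]
        rw [hMb, mul_one]; exact hr
  obtain ⟨b, heb, hb⟩ := succ_exists G hreg hk e
  have s1 := cube_pos_fwd G hreg hk hg heb hb
  obtain ⟨w⟩ := hconn.preconnected b.toProd.2 f.toProd.1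
  have hreach := reach_of_walk G hreg hk hg w b f rfl rfl
  obtain ⟨r, hr⟩ := key hreach
  refine ⟨r + 1, by omega, ?_⟩
  rw [pow_succ', Matrix.mul_apply]
  refine Finset.sum_pos' (fun i _ => mul_nonneg (hM0 _ _) (hpow r _ _))
    ⟨b, Finset.mem_univ _, ?_⟩
  have hMe : M e b = 1 := by rw [hM]; simp only [posSupp]; rw [if_pos s1]
  rw [hMe, one_mul]; exact hr
end

section
/- Let G be a finite simple graph with m edges and minimum degree δ(G) ≥ 2, and let U be its Grover transition matrix. Then J₀ · U⁺ · J₀ = (U⁺)ᵀ, where J₀ is the arc-inversion matrix. -/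
open Matrix SimpleGraph

variable {V : Type*} [Fintype V] [DecidableEq V]

/-! Conjugation by `J₀` reverses both arcs, and reversing both arcs transposes `U`:
`U (e⁻¹, f⁻¹) = U (f, e)`, because `f⁻¹` follows `e⁻¹` through the vertex `t(e)` exactly when
`e` follows `f` through that same vertex. Positive supports are taken entrywise, so they commute
with both reindexing and transposition. -/

section

variable (G : SimpleGraph V) [DecidableRel G.Adj]

theorem J0_mul_mul_J0 (M : Matrix G.Dart G.Dart ℝ) :
    J0 G * M * J0 G = M.submatrix Dart.symm Dart.symm := by
  have symm_eq_iff : ∀ d d' : G.Dart, d = d'.symm ↔ d' = d.symm := fun d d' =>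
    ⟨fun h => by rw [h, Dart.symm_symm], fun h => by rw [h, Dart.symm_symm]⟩
  ext e f
  simp [J0, Matrix.mul_apply, symm_eq_iff, Finset.sum_ite_eq']

theorem grover_submatrix_symm :
    (grover G).submatrix Dart.symm Dart.symm = (grover G)ᵀ := by
  ext e f
  by_cases hef : e = f.symm
  · subst hef
    simp only [submatrix_apply, transpose_apply, grover, Dart.symm_symm, if_pos]
    -- `G.degree v` carries a `Fintype` instance depending on `v`, so `simp` cannot rewrite `v`.
    rfl
  · have hfe : f.symm ≠ e := fun h => hef h.symm
    simp only [submatrix_apply, transpose_apply, grover, Dart.symm_symm, Dart.symm_toProd,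
      Prod.fst_swap, Prod.snd_swap, if_neg hfe, if_neg hef]
    by_cases hadj : f.toProd.1 = e.toProd.2
    · rw [if_pos hadj, if_pos hadj.symm, hadj]
      rfl
    · rw [if_neg hadj, if_neg (Ne.symm hadj)]

end

theorem posSupp_submatrix {α β : Type*} (M : Matrix α α ℝ) (g : β → α) :
    posSupp (M.submatrix g g) = (posSupp M).submatrix g g :=
  rfl

theorem J0_posSupp_grover_J0_general (G : SimpleGraph V) [DecidableRel G.Adj] :
    J0 G * posSupp (grover G) * J0 G = (posSupp (grover G))ᵀ := by
  rw [J0_mul_mul_J0, ← posSupp_submatrix, grover_submatrix_symm, posSupp_transpose]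

/-- if `δ(G) ≥ 2` then `J₀ U⁺ J₀ = (U⁺)ᵀ`. -/
theorem J0_posSupp_grover_J0 (G : SimpleGraph V) [DecidableRel G.Adj]
    (hδ : ∀ v : V, 2 ≤ G.degree v) :
    J0 G * posSupp (grover G) * J0 G = (posSupp (grover G))ᵀ :=
  J0_posSupp_grover_J0_general G
end

section
/- Let G be a finite simple graph with m edges and girth g(G) > 4. Then every entry of the cube (B − J₀)³ of the edge matrix lies in {0,1}; that is, for any two arcs e, f ∈ D(G) there is at most one non-backtracking path of length 3 from e to f. -/
open Matrix SimpleGraph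

variable {V : Type*} [Fintype V] [DecidableEq V]

lemma no4 (G : SimpleGraph V) (a b c d : V)
    (hab : G.Adj a b) (hbc : G.Adj b c) (hcd : G.Adj c d) (hda : G.Adj d a)
    (hac : a ≠ c) (hbd : b ≠ d) (hg : 4 < G.egirth) : False := by
  have hc : ((Walk.cons hab (Walk.cons hbc (Walk.cons hcd hda.toWalk))) : G.Walk a a).IsCycle := by
    simp [Walk.isCycle_def, Walk.isTrail_def, hab.ne, hbc.ne, hcd.ne, hda.ne, hda.ne',
      hab.ne', hbc.ne', hcd.ne', hac, hbd, hac.symm, hbd.symm, Sym2.eq, Sym2.rel_iff']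
  have h5 : (5 : ℕ∞) ≤ G.egirth := Order.add_one_le_of_lt hg
  have := le_egirth.mp h5 a _ hc
  simp [Walk.length_cons] at this
  exact absurd this (by norm_num)

lemma N_apply (G : SimpleGraph V) [DecidableRel G.Adj] (e g : G.Dart) :
    (Bmat G - J0 G) e g =
      if e.toProd.2 = g.toProd.1 ∧ g ≠ e.symm then 1 else 0 := by
  simp only [Matrix.sub_apply, Bmat, J0]
  by_cases h : g = e.symm
  · subst h; simp [Dart.symm]
  · simp [h]

/-- if the girth of `G` is greater than `4`, then every entry of
`(B - J₀)³` lies in `{0, 1}`. -/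
theorem edge_matrix_cube_entries (G : SimpleGraph V) [DecidableRel G.Adj]
    (hg : 4 < G.egirth) (e f : G.Dart) :
    ((Bmat G - J0 G) ^ 3) e f = 0 ∨ ((Bmat G - J0 G) ^ 3) e f = 1 := by
  classical
  set P : G.Dart × G.Dart → Prop := fun p =>
    (e.toProd.2 = p.2.toProd.1 ∧ p.2 ≠ e.symm) ∧
    ((p.2.toProd.2 = p.1.toProd.1 ∧ p.1 ≠ p.2.symm) ∧
    (p.1.toProd.2 = f.toProd.1 ∧ f ≠ p.1.symm)) with hP
  have hcube : ((Bmat G - J0 G) ^ 3) e f = ((Finset.univ.filter P).card : ℝ) := by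
    rw [show (3:ℕ) = 2 + 1 from rfl, pow_succ, pow_two]
    rw [Matrix.mul_apply]
    simp only [Matrix.mul_apply, Finset.sum_mul]
    rw [← Finset.sum_product', Finset.univ_product_univ]
    simp only [N_apply, ite_mul, zero_mul, one_mul, mul_ite, mul_zero, mul_one, ← ite_and]
    rw [Finset.sum_boole]
    norm_num
    congr 1
    ext x
    simp only [Finset.mem_filter, hP]
    tauto
  have hcard : (Finset.univ.filter P).card ≤ 1 := by
    rw [Finset.card_le_one]
    rintro ⟨h₁, g₁⟩ hm1 ⟨h₂, g₂⟩ hm2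
    simp only [Finset.mem_filter, hP] at hm1 hm2
    obtain ⟨-, ⟨heg1, hg1ne⟩, ⟨hgh1, hh1ne⟩, ⟨hhf1, -⟩⟩ := hm1
    obtain ⟨-, ⟨heg2, hg2ne⟩, ⟨hgh2, hh2ne⟩, ⟨hhf2, -⟩⟩ := hm2
    -- g₁ g₂ are first darts, h₁ h₂ second
    by_cases hw : g₁.toProd.2 = g₂.toProd.2
    · have hg : g₁ = g₂ := Dart.ext _ _ (Prod.ext (heg1 ▸ heg2.symm ▸ rfl) hw)
      have hh : h₁ = h₂ := Dart.ext _ _ (Prod.ext (by rw [← hgh1, ← hgh2, hg]) (by rw [hhf1, hhf2]))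
      simp [hg, hh]
    · exfalso
      have hv : e.toProd.2 ≠ f.toProd.1 := by
        intro hvv
        apply hh1ne
        apply Dart.ext
        apply Prod.ext
        · exact hgh1.symm
        · rw [hhf1, ← hvv, heg1]; rfl
      exact no4 G e.toProd.2 g₁.toProd.2 f.toProd.1 g₂.toProd.2
        (heg1 ▸ g₁.adj) (hgh1 ▸ hhf1 ▸ h₁.adj)
        ((hgh2 ▸ hhf2 ▸ h₂.adj : G.Adj g₂.toProd.2 f.toProd.1)).symm
        ((heg2 ▸ g₂.adj : G.Adj e.toProd.2 g₂.toProd.2)).symm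
        hv hw hg
  rw [hcube]
  interval_cases h : (Finset.univ.filter P).card
  · left; norm_num
  · right; norm_num
end

section
/- Let G be a finite simple graph with m edges and girth g(G) > 4, and let T = B − J₀ be its edge matrix. Then the supports of T³ and J₀·T·J₀ are disjoint: there is no pair of arcs (e,f) ∈ D(G)×D(G) for which both the (e,f) entry of T³ and the (e,f) entry of J₀·T·J₀ are nonzero. -/
open Matrix SimpleGraph

variable {V : Type*} [Fintype V] [DecidableEq V]

lemma Tne' (G : SimpleGraph V) [DecidableRel G.Adj] {e f : G.Dart}
    (h : (Bmat G - J0 G) e f ≠ 0) :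
    e.toProd.2 = f.toProd.1 ∧ f ≠ e.symm := by
  simp only [Matrix.sub_apply, Bmat, J0] at h
  by_cases h1 : f = e.symm
  · subst h1; simp [Dart.symm_toProd] at h
  by_cases h2 : e.toProd.2 = f.toProd.1
  · exact ⟨h2, h1⟩
  · simp [h1, h2] at h

lemma J0mul (G : SimpleGraph V) [DecidableRel G.Adj] (M : Matrix G.Dart G.Dart ℝ)
    (e f : G.Dart) : (J0 G * M) e f = M e.symm f := by
  simp [Matrix.mul_apply, J0, ite_mul, Finset.sum_ite_eq, Finset.sum_ite_eq']

lemma mulJ0 (G : SimpleGraph V) [DecidableRel G.Adj] (M : Matrix G.Dart G.Dart ℝ)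
    (e f : G.Dart) : (M * J0 G) e f = M e f.symm := by
  have : ∀ h : G.Dart, (f = h.symm) = (h = f.symm) := by
    intro h
    simp only [eq_iff_iff]
    constructor <;> rintro rfl <;> simp
  simp [Matrix.mul_apply, J0, mul_ite, Finset.sum_ite_eq, Finset.sum_ite_eq', this]

/-- if the girth of `G` is greater than `4`, then the supports of
`T³` and `J₀ T J₀` (where `T = B - J₀`) are disjoint. -/
theorem supports_disjoint (G : SimpleGraph V) [DecidableRel G.Adj]
    (hg : 4 < G.egirth) :
    ¬ ∃ e f : G.Dart, ((Bmat G - J0 G) ^ 3) e f ≠ 0 ∧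
      (J0 G * (Bmat G - J0 G) * J0 G) e f ≠ 0 := by
  rintro ⟨e, f, h3, hJ⟩
  rw [mulJ0, J0mul] at hJ
  obtain ⟨hfa', -⟩ := Tne' G hJ
  have hfa : f.toProd.2 = e.toProd.1 := by
    simpa [SimpleGraph.Dart.symm_toProd] using hfa'.symm
  have h33 : ((Bmat G - J0 G) * (Bmat G - J0 G) * (Bmat G - J0 G)) e f ≠ 0 := by
    rwa [pow_succ, pow_succ, pow_one] at h3
  rw [Matrix.mul_apply] at h33
  obtain ⟨h, -, hh⟩ := Finset.exists_ne_zero_of_sum_ne_zero h33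
  obtain ⟨hA, hB⟩ := mul_ne_zero_iff.mp hh
  rw [Matrix.mul_apply] at hA
  obtain ⟨g, -, hg'⟩ := Finset.exists_ne_zero_of_sum_ne_zero hA
  obtain ⟨hC, hD⟩ := mul_ne_zero_iff.mp hg'
  obtain ⟨heg, hne1⟩ := Tne' G hC
  obtain ⟨hgh, hne2⟩ := Tne' G hD
  obtain ⟨hhf, hne3⟩ := Tne' G hB
  -- vertices
  have hab : G.Adj e.toProd.1 e.toProd.2 := e.adj
  have hbc : G.Adj e.toProd.2 g.toProd.2 := heg ▸ g.adj
  have hcd : G.Adj g.toProd.2 h.toProd.2 := hgh ▸ h.adj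
  have hda : G.Adj h.toProd.2 e.toProd.1 := by
    have := f.adj
    rwa [← hhf, hfa] at this
  have hac : e.toProd.1 ≠ g.toProd.2 := by
    intro hh'
    exact hne1 (SimpleGraph.Dart.ext _ _
      (Prod.ext (by simp [SimpleGraph.Dart.symm_toProd, heg.symm])
        (by simp [SimpleGraph.Dart.symm_toProd, hh'.symm])))
  have hbd : e.toProd.2 ≠ h.toProd.2 := by
    intro hh'
    exact hne2 (SimpleGraph.Dart.ext _ _
      (Prod.ext (by simp [SimpleGraph.Dart.symm_toProd, hgh.symm])
        (by simp [SimpleGraph.Dart.symm_toProd, heg, hh'.symm])))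
  set a := e.toProd.1
  set b := e.toProd.2
  set c := g.toProd.2
  set d := h.toProd.2
  let w : G.Walk a a := .cons hab (.cons hbc (.cons hcd (.cons hda .nil)))
  have hcyc : w.IsCycle := by
    simp [w, SimpleGraph.Walk.isCycle_def, SimpleGraph.Walk.isTrail_def, List.nodup_cons,
      Sym2.eq_iff, hab.ne, hbc.ne, hcd.ne, hda.ne, hac, hbd,
      hab.ne', hbc.ne', hcd.ne', hda.ne', hac.symm, hbd.symm, Ne.symm hac, Ne.symm hbd]
  have hle : G.egirth ≤ 4 := by
    have := SimpleGraph.le_egirth.mp le_rfl a w hcyc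
    simpa [w, SimpleGraph.Walk.length_cons] using this
  exact hg.not_ge hle
end
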